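/- Let G be a group generated by a finite symmetric set S and let (F_n) be a Følner exhaustion of G. Then for every fixed k ∈ ℕ: |Ω_k(F_n)|/|F_n| → 1 and |B_k(F_n)|/|F_n| → 1 as n → ∞; consequently |Ω_k(F_n)|/|B_k(F_n)| → 1. -/

import Mathlib

open Pointwise Filter Topology

section Defs

variable {G : Type*} [Group G]

/-- The word ball of radius `k` with respect to the generating set `S`. -/
noncomputable def wball (S : Finset G) (k : ℕ) : Finset G :=
  letI := Classical.decEq G
  (insert (1 : G) S) ^ k

/-- The `k`-neighborhood `B_k(F) = B_k * F` of a finite set `F`. -/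
noncomputable def wnbhd (S : Finset G) (k : ℕ) (F : Finset G) : Finset G :=
  letI := Classical.decEq G
  wball S k * F

/-- The `k`-interior `Ω_k(F)` of a finite set `F`. -/
noncomputable def winter (S : Finset G) (k : ℕ) (F : Finset G) : Finset G :=
  letI := Classical.decEq G
  F.filter fun p => wball S k * {p} ⊆ F

/-- The boundary `∂F` of a finite set `F`. -/
noncomputable def wbdry (S : Finset G) (F : Finset G) : Finset G :=
  letI := Classical.decEq G
  F.filter fun p => ∃ s ∈ S, s * p ∉ F

/-- `S` is a finite symmetric generating set. -/
def IsSymmGen (S : Finset G) : Prop :=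
  (∀ s ∈ S, s⁻¹ ∈ S) ∧ Subgroup.closure (S : Set G) = ⊤

/-- A Følner exhaustion of `G`. -/
def IsFolnerExhaustion (S : Finset G) (F : ℕ → Finset G) : Prop :=
  (1 : G) ∈ F 0 ∧ Monotone F ∧ (∀ g : G, ∃ n, g ∈ F n) ∧
    Filter.Tendsto (fun n => ((wbdry S (F n)).card : ℝ) / ((F n).card : ℝ))
      Filter.atTop (nhds 0)

variable {d : ℕ}

/-- The space of vectors supported in `Fs` such that `A.mulVec f` vanishes on `Fv`. -/
noncomputable def kerOn (A : Matrix (Fin d) (Fin d) (MonoidAlgebra ℂ G))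
    (Fs Fv : Finset G) : Submodule ℂ (Fin d → MonoidAlgebra ℂ G) where
  carrier := {f | (∀ i, (f i).coeff.support ⊆ Fs) ∧ ∀ i, ∀ g ∈ Fv, (A.mulVec f i).coeff g = 0}
  zero_mem' := ⟨fun i => by simp, fun i g hg => by simp [Matrix.mulVec_zero]⟩
  add_mem' := by
    classical
    rintro f g ⟨hf1, hf2⟩ ⟨hg1, hg2⟩
    constructor
    · intro i
      exact Finsupp.support_add.trans (Finset.union_subset (hf1 i) (hg1 i))
    · intro i x hx
      have h : A.mulVec (f + g) = A.mulVec f + A.mulVec g := Matrix.mulVec_add A f g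
      rw [h]
      show ((A.mulVec f i).coeff + (A.mulVec g i).coeff) x = 0
      rw [Finsupp.add_apply, hf2 i x hx, hg2 i x hx, add_zero]
  smul_mem' := by
    classical
    rintro c f ⟨hf1, hf2⟩
    constructor
    · intro i
      exact (Finsupp.support_smul).trans (hf1 i)
    · intro i x hx
      have h : A.mulVec (c • f) = c • A.mulVec f := Matrix.mulVec_smul A c f
      rw [h]
      show (c • (A.mulVec f i).coeff) x = 0
      rw [Finsupp.smul_apply, hf2 i x hx, smul_zero]

/-- The space of vectors supported in `Fs` with `A.mulVec f = 0`. -/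
noncomputable def kerAll (A : Matrix (Fin d) (Fin d) (MonoidAlgebra ℂ G))
    (Fs : Finset G) : Submodule ℂ (Fin d → MonoidAlgebra ℂ G) where
  carrier := {f | (∀ i, (f i).coeff.support ⊆ Fs) ∧ A.mulVec f = 0}
  zero_mem' := ⟨fun i => by simp, Matrix.mulVec_zero A⟩
  add_mem' := by
    classical
    rintro f g ⟨hf1, hf2⟩ ⟨hg1, hg2⟩
    exact ⟨fun i => Finsupp.support_add.trans (Finset.union_subset (hf1 i) (hg1 i)),
      by rw [Matrix.mulVec_add, hf2, hg2, add_zero]⟩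
  smul_mem' := by
    classical
    rintro c f ⟨hf1, hf2⟩
    exact ⟨fun i => (Finsupp.support_smul).trans (hf1 i),
      by rw [Matrix.mulVec_smul, hf2, smul_zero]⟩

/-- `V(F)`. -/
noncomputable def VSpace (A : Matrix (Fin d) (Fin d) (MonoidAlgebra ℂ G)) (F : Finset G) :
    Submodule ℂ (Fin d → MonoidAlgebra ℂ G) :=
  kerOn A F F

/-- `Z(F)`. -/
noncomputable def ZSpace (S : Finset G) (w : ℕ) (A : Matrix (Fin d) (Fin d) (MonoidAlgebra ℂ G))
    (F : Finset G) : Submodule ℂ (Fin d → MonoidAlgebra ℂ G) :=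
  kerOn A (wnbhd S w F) F

/-- `W(F)`. -/
noncomputable def WSpace (S : Finset G) (w : ℕ) (A : Matrix (Fin d) (Fin d) (MonoidAlgebra ℂ G))
    (F : Finset G) : Submodule ℂ (Fin d → MonoidAlgebra ℂ G) :=
  kerAll A (winter S w F)

/-- `A.mulVec` as a `ℂ`-linear map. -/
noncomputable def mulVecL {R : Type*} [Ring R] [Algebra ℂ R] {d : ℕ}
    (A : Matrix (Fin d) (Fin d) R) : (Fin d → R) →ₗ[ℂ] (Fin d → R) where
  toFun := A.mulVec
  map_add' := Matrix.mulVec_add A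
  map_smul' c v := Matrix.mulVec_smul A c v

/-- Coordinatewise restriction to `F` (multiplication by the indicator of `F`). -/
noncomputable def restrictTo (d : ℕ) (F : Finset G) :
    (Fin d → MonoidAlgebra ℂ G) →ₗ[ℂ] (Fin d → MonoidAlgebra ℂ G) :=
  letI := Classical.decEq G
  { toFun := fun f i => MonoidAlgebra.ofCoeff ((f i).coeff.filter (· ∈ F))
    map_add' := fun f g => by
      funext i
      exact congrArg MonoidAlgebra.ofCoeff Finsupp.filter_add
    map_smul' := fun c f => by
      funext i
      exact congrArg MonoidAlgebra.ofCoeff Finsupp.filter_smul }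

end Defs

section Tiling

variable {ι α : Type*}

/-- An `ε`-disjoint family of finite sets. -/
def EpsDisjoint (I : Finset ι) (A : ι → Finset α) (ε : ℝ) : Prop :=
  ∃ Ab : ι → Finset α, (∀ i ∈ I, Ab i ⊆ A i) ∧
    (∀ i ∈ I, ((1 - ε) * (A i).card : ℝ) ≤ ((Ab i).card : ℝ)) ∧
    ∀ i ∈ I, ∀ j ∈ I, i ≠ j → Disjoint (Ab i) (Ab j)

/-- The family `(A i)_{i ∈ I}` `a`-covers `X`. -/
def CoversFrac (I : Finset ι) (A : ι → Finset α) (X : Finset α) (a : ℝ) : Prop :=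
  letI := Classical.decEq α
  (a * X.card : ℝ) ≤ ((X ∩ I.biUnion A).card : ℝ)

/-- The family `(A i)_{i ∈ I}` `δ`-evenly covers `X`. -/
def EvenCovering (I : Finset ι) (A : ι → Finset α) (X : Finset α) (δ : ℝ) : Prop :=
  letI := Classical.decEq α
  ∃ M : ℕ, 1 ≤ M ∧ (∀ p ∈ X, (I.filter fun i => p ∈ A i).card ≤ M) ∧
    ((1 - δ) * M * X.card : ℝ) ≤ ∑ i ∈ I, ((A i).card : ℝ)

/-- The right translate `H·x`. -/
noncomputable def rtrans [Mul α] (H : Finset α) (x : α) : Finset α :=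
  letI := Classical.decEq α
  H.image (· * x)

end Tiling

section Supp

variable {G : Type*} [Group G]

/-- Vectors all of whose coordinates are supported in `F`. -/
noncomputable def suppIn (d : ℕ) (F : Finset G) :
    Submodule ℂ (Fin d → MonoidAlgebra ℂ G) where
  carrier := {f | ∀ i, (f i).coeff.support ⊆ F}
  zero_mem' := fun i => by simp
  add_mem' := by
    classical
    intro f g hf hg i
    exact Finsupp.support_add.trans (Finset.union_subset (hf i) (hg i))
  smul_mem' := fun c f hf i => (Finsupp.support_smul).trans (hf i)

end Supp

/-!
A point `p ∈ F` leaves `F` along a word `b ∈ B_k` only by passing through the boundary: the first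
letter that carries the partial product out of `F` is applied at a point `c * p ∈ ∂F`, where `c` is
a suffix of `b` and the remaining prefix is again in `B_k`. Hence both `F \ Ω_k(F)` and
`B_k(F) \ F` lie in `B_k^{±1} * ∂F`, so they have at most `|B_k| |∂F| = o(|F|)` elements.
-/

section WordBall

attribute [local instance] Classical.decEq

open Finset

variable {G : Type*} [Group G] {S F : Finset G} {k : ℕ}

lemma one_mem_wball (S : Finset G) (k : ℕ) : (1 : G) ∈ wball S k :=
  one_mem_pow (mem_insert_self 1 S)

lemma wball_mono (S : Finset G) : Monotone (wball S) :=
  Finset.pow_right_monotone (mem_insert_self 1 S)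

lemma mem_wbdry {p : G} : p ∈ wbdry S F ↔ p ∈ F ∧ ∃ s ∈ S, s * p ∉ F := by
  simp [wbdry]

lemma exists_factor_mul_mem_wbdry {b p : G} (hb : b ∈ wball S k) (hp : p ∈ F)
    (hbp : b * p ∉ F) : ∃ c ∈ wball S k, ∃ d ∈ wball S k, b = d * c ∧ c * p ∈ wbdry S F := by
  induction k generalizing b p with
  | zero =>
    rw [wball, pow_zero, Finset.mem_one] at hb
    simp [hb, hp] at hbp
  | succ n ih =>
    rw [wball, pow_succ] at hb
    obtain ⟨b', hb', s, hs, rfl⟩ := mem_mul.1 hb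
    by_cases hsp : s * p ∈ F
    · obtain ⟨c, hc, d, hd, rfl, hcsp⟩ := ih hb' hsp (by rwa [← mul_assoc])
      refine ⟨c * s, ?_, d, wball_mono S n.le_succ hd, by group, by rwa [mul_assoc]⟩
      rw [wball, pow_succ]
      exact mul_mem_mul hc hs
    · have hsS : s ∈ S := (mem_insert.1 hs).resolve_left (by rintro rfl; simp [hp] at hsp)
      exact ⟨1, one_mem_wball S _, b' * s, hb, (mul_one _).symm,
        by rw [one_mul]; exact mem_wbdry.2 ⟨hp, s, hsS, hsp⟩⟩

lemma winter_subset (S : Finset G) (k : ℕ) (F : Finset G) : winter S k F ⊆ F :=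
  filter_subset _ _

lemma subset_wnbhd (S : Finset G) (k : ℕ) (F : Finset G) : F ⊆ wnbhd S k F := fun p hp => by
  simpa [wnbhd] using mul_mem_mul (one_mem_wball S k) hp

lemma sdiff_winter_subset : F \ winter S k F ⊆ (wball S k)⁻¹ * wbdry S F := by
  intro p hp
  obtain ⟨hpF, hpΩ⟩ := mem_sdiff.1 hp
  obtain ⟨b, hb, hbp⟩ : ∃ b ∈ wball S k, b * p ∉ F := by
    simpa [winter, hpF, subset_iff, Finset.mem_mul] using hpΩ
  obtain ⟨c, hc, -, -, -, hcp⟩ := exists_factor_mul_mem_wbdry hb hpF hbp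
  simpa using mul_mem_mul (inv_mem_inv hc) hcp

lemma wnbhd_sdiff_subset : wnbhd S k F \ F ⊆ wball S k * wbdry S F := by
  intro x hx
  obtain ⟨hxN, hxF⟩ := mem_sdiff.1 hx
  obtain ⟨b, hb, p, hp, rfl⟩ := mem_mul.1 hxN
  obtain ⟨c, -, d, hd, rfl, hcp⟩ := exists_factor_mul_mem_wbdry hb hp hxF
  simpa [mul_assoc] using mul_mem_mul hd hcp

lemma card_le_card_winter_add :
    #F ≤ #(winter S k F) + #(wball S k) * #(wbdry S F) :=
  calc #F ≤ #(F \ winter S k F) + #(winter S k F) := card_le_card_sdiff_add_card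
    _ ≤ #(wball S k)⁻¹ * #(wbdry S F) + #(winter S k F) := by
      gcongr; exact (card_le_card sdiff_winter_subset).trans card_mul_le
    _ = #(winter S k F) + #(wball S k) * #(wbdry S F) := by rw [card_inv, add_comm]

lemma card_wnbhd_le : #(wnbhd S k F) ≤ #F + #(wball S k) * #(wbdry S F) :=
  calc #(wnbhd S k F) ≤ #(wnbhd S k F \ F) + #F := card_le_card_sdiff_add_card
    _ ≤ #(wball S k) * #(wbdry S F) + #F := by
      gcongr; exact (card_le_card wnbhd_sdiff_subset).trans card_mul_le
    _ = #F + #(wball S k) * #(wbdry S F) := add_comm _ _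

end WordBall

lemma tendsto_div_of_le_add_mul {x y z : ℕ → ℝ} (C : ℝ) (hy : ∀ n, 0 < y n)
    (hxy : ∀ n, x n ≤ y n + C * z n) (hyx : ∀ n, y n ≤ x n + C * z n)
    (hz : Tendsto (fun n => z n / y n) atTop (𝓝 0)) :
    Tendsto (fun n => x n / y n) atTop (𝓝 1) := by
  rw [tendsto_iff_norm_sub_tendsto_zero]
  refine squeeze_zero_norm (fun n => ?_) (by simpa using hz.const_mul C)
  rw [norm_norm, Real.norm_eq_abs, div_sub_one (hy n).ne', abs_div, abs_of_pos (hy n),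
    mul_div_assoc']
  exact div_le_div_of_nonneg_right
    (abs_sub_le_iff.2 ⟨by linarith [hxy n], by linarith [hyx n]⟩) (hy n).le

theorem folner_interior_neighborhood_ratio_general {G : Type*} [Group G] (S : Finset G)
    (F : ℕ → Finset G) (hF : IsFolnerExhaustion S F) (k : ℕ) :
    Tendsto (fun n => ((winter S k (F n)).card : ℝ) / ((F n).card : ℝ)) atTop (𝓝 1) ∧
    Tendsto (fun n => ((wnbhd S k (F n)).card : ℝ) / ((F n).card : ℝ)) atTop (𝓝 1) ∧
    Tendsto (fun n => ((winter S k (F n)).card : ℝ) / ((wnbhd S k (F n)).card : ℝ)) atTop (𝓝 1) := by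
  obtain ⟨h1F, hmono, -, hbdry⟩ := hF
  have hpos : ∀ n, (0 : ℝ) < (F n).card := fun n => by
    exact_mod_cast Finset.card_pos.2 ⟨1, hmono n.zero_le h1F⟩
  have hΩ := tendsto_div_of_le_add_mul (x := fun n => ((winter S k (F n)).card : ℝ))
    ((wball S k).card) hpos
    (fun n => by exact_mod_cast le_add_right (Finset.card_le_card (winter_subset S k (F n))))
    (fun n => by exact_mod_cast card_le_card_winter_add) hbdry
  have hB := tendsto_div_of_le_add_mul (x := fun n => ((wnbhd S k (F n)).card : ℝ))
    ((wball S k).card) hpos (fun n => by exact_mod_cast card_wnbhd_le)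
    (fun n => by exact_mod_cast le_add_right (Finset.card_le_card (subset_wnbhd S k (F n))))
    hbdry
  refine ⟨hΩ, hB, ?_⟩
  simpa using (hΩ.div hB one_ne_zero).congr fun n => div_div_div_cancel_right₀ (hpos n).ne' _ _

theorem folner_interior_neighborhood_ratio {G : Type*} [Group G] (S : Finset G)
    (hS : IsSymmGen S) (F : ℕ → Finset G) (hF : IsFolnerExhaustion S F) (k : ℕ) :
    Tendsto (fun n => ((winter S k (F n)).card : ℝ) / ((F n).card : ℝ)) atTop (𝓝 1) ∧
    Tendsto (fun n => ((wnbhd S k (F n)).card : ℝ) / ((F n).card : ℝ)) atTop (𝓝 1) ∧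
    Tendsto (fun n => ((winter S k (F n)).card : ℝ) / ((wnbhd S k (F n)).card : ℝ)) atTop (𝓝 1) :=
  folner_interior_neighborhood_ratio_general S F hF k
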